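/- Let φ be a linear automorphism of a finite-dimensional real vector space N preserving a spanning closed salient cone (the nef cone), and suppose φ fixes a vector A in the interior of the cone. Then all eigenvalues of φ have modulus 1; in particular the spectral radius of φ (and of φ⁻¹) equals 1. -/
import Mathlib


open Filter Topology

lemma aux17 {V : Type*} [NormedAddCommGroup V] [NormedSpace ℝ V]
    (C : ConvexCone ℝ V)
    (hclosed : IsClosed (C : Set V))
    (hsalient : ∀ v ∈ C, -v ∈ C → v = (0 : V))
    (ψ : V ≃ₗ[ℝ] V) (hψC : ψ '' (C : Set V) = (C : Set V))
    (A : V) (hA : A ∈ interior (C : Set V)) (hfix : ψ A = A)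
    (μ : ℝ) (v : V) (hv : v ≠ 0) (heig : ψ v = μ • v) : |μ| ≤ 1 := by
  by_contra hgt
  push_neg at hgt
  obtain ⟨ε, hε, hball⟩ := Metric.isOpen_iff.mp isOpen_interior A hA
  have hvnorm : (0:ℝ) < ‖v‖ + 1 := by positivity
  set t : ℝ := ε / (2 * (‖v‖ + 1)) with ht
  have htpos : 0 < t := by positivity
  have hmem : ∀ s : ℝ, |s| ≤ t → A + s • v ∈ (C : Set V) := by
    intro s hs
    apply interior_subset
    apply hball
    simp only [Metric.mem_ball, dist_eq_norm, add_sub_cancel_left, norm_smul,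
      Real.norm_eq_abs]
    have hv0 : (0:ℝ) ≤ ‖v‖ := norm_nonneg v
    calc |s| * ‖v‖ ≤ t * ‖v‖ := by
          exact mul_le_mul_of_nonneg_right hs hv0
      _ < ε := by
          rw [ht, div_mul_eq_mul_div, div_lt_iff₀ (by positivity)]
          nlinarith
  have hCψ : ∀ x ∈ (C : Set V), ψ x ∈ (C : Set V) := by
    intro x hx
    rw [← hψC]; exact Set.mem_image_of_mem _ hx
  set lam : ℝ := μ ^ 2 with hlam
  have hlam1 : 1 < lam := by
    have h1 : 1 < |μ| ^ 2 := by nlinarith [abs_nonneg μ]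
    rwa [sq_abs] at h1
  have hlam0 : 0 < lam := lt_trans one_pos hlam1
  have hstep : ∀ u : V, ψ u = μ • u → A + u ∈ (C : Set V) →
      A + lam • u ∈ (C : Set V) := by
    intro u hu hC
    have h1 : ψ (A + u) = A + μ • u := by rw [map_add, hfix, hu]
    have h2 : ψ (A + μ • u) = A + lam • u := by
      rw [map_add, hfix, map_smul, hu, smul_smul, hlam, sq]
    have := hCψ _ (hCψ _ hC)
    rwa [h1, h2] at this
  have hiter : ∀ u : V, ψ u = μ • u → A + u ∈ (C : Set V) →
      ∀ n : ℕ, A + (lam ^ n) • u ∈ (C : Set V) := by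
    intro u hu hC n
    induction n with
    | zero => simpa using hC
    | succ n ih =>
        have := hstep ((lam ^ n) • u)
          (by rw [map_smul, hu, smul_smul, smul_smul]; ring_nf) ih
        rwa [smul_smul, ← pow_succ'] at this
  have hlimit : ∀ u : V, ψ u = μ • u → A + u ∈ (C : Set V) → u ∈ (C : Set V) := by
    intro u hu hC
    have hseq : ∀ n : ℕ, ((lam⁻¹) ^ n) • A + u ∈ (C : Set V) := by
      intro n
      have h1 : ((lam⁻¹) ^ n) • (A + (lam ^ n) • u) ∈ (C : Set V) :=
        C.smul_mem (by positivity) (hiter u hu hC n)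
      rwa [smul_add, smul_smul, ← mul_pow, inv_mul_cancel₀ (ne_of_gt hlam0),
        one_pow, one_smul] at h1
    have h0 : Tendsto (fun n : ℕ => ((lam⁻¹ : ℝ)) ^ n) atTop (𝓝 0) :=
      tendsto_pow_atTop_nhds_zero_of_lt_one (by positivity)
        (by rw [inv_lt_one_iff₀]; right; exact hlam1)
    have hlim : Tendsto (fun n : ℕ => ((lam⁻¹) ^ n) • A + u) atTop (𝓝 u) := by
      have := (h0.smul_const A).add (tendsto_const_nhds (x := u))
      simpa using this
    exact hclosed.mem_of_tendsto hlim (Eventually.of_forall hseq)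
  set w : V := t • v with hw
  have hww : ψ w = μ • w := by rw [hw, map_smul, heig, smul_comm]
  have hw1 : w ∈ (C : Set V) := hlimit w hww (hmem t (by rw [abs_of_pos htpos]))
  have hw2 : -w ∈ (C : Set V) := by
    refine hlimit (-w) (by rw [map_neg, hww, smul_neg]) ?_
    have := hmem (-t) (by rw [abs_neg, abs_of_pos htpos])
    rwa [neg_smul, ← hw, ← sub_eq_add_neg, sub_eq_add_neg] at this
  have : w = 0 := hsalient w hw1 hw2
  rw [hw, smul_eq_zero] at this
  rcases this with h | h
  · exact absurd h (ne_of_gt htpos)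
  · exact hv h

/-- let `φ` be a linear automorphism of a finite-dimensional real
vector space preserving a closed salient convex cone `C` with nonempty interior
(`φ(C) = C`), and suppose `φ` fixes a vector `A` in the interior of `C`. Then
every (real) eigenvalue of `φ` (and of `φ⁻¹`) has modulus `1`. -/
theorem stmt17 {V : Type*} [NormedAddCommGroup V] [NormedSpace ℝ V]
    [FiniteDimensional ℝ V] (C : ConvexCone ℝ V)
    (hclosed : IsClosed (C : Set V))
    (hsalient : ∀ v ∈ C, -v ∈ C → v = (0 : V))
    (hint : (interior (C : Set V)).Nonempty)
    (φ : V ≃ₗ[ℝ] V) (hφC : φ '' (C : Set V) = (C : Set V))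
    (A : V) (hA : A ∈ interior (C : Set V)) (hfix : φ A = A) :
    (∀ μ : ℝ, Module.End.HasEigenvalue (φ : V →ₗ[ℝ] V) μ → |μ| = 1) ∧
      (∀ μ : ℝ, Module.End.HasEigenvalue (φ.symm : V →ₗ[ℝ] V) μ → |μ| = 1) := by
  have hsymmC : φ.symm '' (C : Set V) = (C : Set V) := by
    conv_lhs => rw [← hφC]
    ext x
    simp [Set.mem_image]
  have hsymmA : φ.symm A = A := by
    conv_lhs => rw [← hfix]
    simp
  have key : ∀ μ : ℝ, ∀ v : V, v ≠ 0 → φ v = μ • v → |μ| = 1 := by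
    intro μ v hv heig
    have hμ0 : μ ≠ 0 := by
      rintro rfl
      apply hv
      have : φ v = 0 := by rw [heig, zero_smul]
      simpa using congrArg φ.symm this
    have h1 : |μ| ≤ 1 := aux17 C hclosed hsalient φ hφC A hA hfix μ v hv heig
    have hsv : φ.symm v = μ⁻¹ • v := by
      have : φ.symm (φ v) = φ.symm (μ • v) := congrArg φ.symm heig
      rw [φ.symm_apply_apply, map_smul] at this
      calc φ.symm v = μ⁻¹ • (μ • φ.symm v) := by
              rw [smul_smul, inv_mul_cancel₀ hμ0, one_smul]
        _ = μ⁻¹ • v := by rw [← this]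
    have h2 : |μ⁻¹| ≤ 1 :=
      aux17 C hclosed hsalient φ.symm hsymmC A hA hsymmA μ⁻¹ v hv hsv
    rw [abs_inv] at h2
    have habs : 0 < |μ| := abs_pos.mpr hμ0
    have : 1 ≤ |μ| := by
      rw [inv_le_one_iff₀] at h2
      rcases h2 with h | h
      · exact absurd h (not_le.mpr habs)
      · exact h
    linarith
  constructor
  · intro μ hμ
    obtain ⟨v, hv⟩ := hμ.exists_hasEigenvector
    exact key μ v hv.right hv.apply_eq_smul
  · intro μ hμ
    obtain ⟨v, hv⟩ := hμ.exists_hasEigenvector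
    have heig : φ.symm v = μ • v := hv.apply_eq_smul
    have hμ0 : μ ≠ 0 := by
      rintro rfl
      apply hv.right
      have : φ.symm v = 0 := by rw [heig, zero_smul]
      simpa using congrArg φ this
    have hφv : φ v = μ⁻¹ • v := by
      have := congrArg φ heig
      rw [φ.apply_symm_apply, map_smul] at this
      calc φ v = μ⁻¹ • (μ • φ v) := by
              rw [smul_smul, inv_mul_cancel₀ hμ0, one_smul]
        _ = μ⁻¹ • v := by rw [← this]
    have := key μ⁻¹ v hv.right hφv
    rw [abs_inv, inv_eq_one] at this
    exact this
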